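/- Let μ be a probability measure on ℝ^N supported in co(G·x) for a finite subgroup G of O(N), and let f : ℝ^N → ℝ be a continuous radial function (f(z) = f̃(‖z‖)) vanishing on the closed ball B(0,r). Define u(y) = ∫ f̃(A(x,y,η)) dμ(η) with A(x,y,η) = sqrt(‖x‖² + ‖y‖² − 2⟨y,η⟩). If u(y) ≠ 0 then max_{g∈G} ‖g·x − y‖ > r; consequently u vanishes on ⋂_{g∈G} B(g·x, r). -/

import Mathlib

/-!
Write `A(x, y, η) = √(‖x‖² + ‖y‖² - 2⟪y, η⟫)`. The radicand is affine in `η` and equals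
`‖g • x - y‖²` at every orbit point `η = g • x`, since `‖g • x‖ = ‖x‖`. Hence on the convex hull
of the orbit, `A(x, y, η) ≤ M := max_g ‖g • x - y‖`. If `M ≤ r`, the integrand `f̃(A(x, y, η))` is
`μ`-a.e. a value of `f̃` on `[0, r]`, which vanishes because `f` vanishes on `B(0, r)`.
-/

open RealInnerProductSpace Metric MeasureTheory

section TranslationDist

variable {E : Type*} [NormedAddCommGroup E] [InnerProductSpace ℝ E]

/-- The function `A(x, y, η)` of Rösler's formula. -/
noncomputable def translationDist (x y η : E) : ℝ :=
  √(‖x‖ ^ 2 + ‖y‖ ^ 2 - 2 * ⟪y, η⟫)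

theorem translationDist_le_of_mem_convexHull {s : Set E} {x y η : E} {M : ℝ}
    (hs : ∀ p ∈ s, ‖p‖ = ‖x‖) (hM₀ : 0 ≤ M) (hM : ∀ p ∈ s, ‖p - y‖ ≤ M)
    (hη : η ∈ convexHull ℝ s) : translationDist x y η ≤ M := by
  have hhull : convexHull ℝ s ⊆ {w | (‖x‖ ^ 2 + ‖y‖ ^ 2 - M ^ 2) / 2 ≤ ⟪y, w⟫} := by
    refine convexHull_min (fun p hp => ?_) (convex_halfSpace_ge (innerₛₗ ℝ y).isLinear _)
    have hsq : ‖p - y‖ ^ 2 ≤ M ^ 2 := pow_le_pow_left₀ (norm_nonneg _) (hM p hp) 2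
    rw [norm_sub_sq_real, hs p hp, real_inner_comm] at hsq
    rw [Set.mem_ofPred_eq]
    linarith
  have hη' : (‖x‖ ^ 2 + ‖y‖ ^ 2 - M ^ 2) / 2 ≤ ⟪y, η⟫ := hhull hη
  exact Real.sqrt_le_iff.mpr ⟨hM₀, by linarith⟩

end TranslationDist

theorem radial_profile_eq_zero_of_le_norm {F : Type*} [NormedAddCommGroup F] [NormedSpace ℝ F]
    {f : F → ℝ} {ftilde : ℝ → ℝ} {r t : ℝ} (hf : ∀ z, f z = ftilde ‖z‖)
    (hvanish : ∀ z ∈ closedBall (0 : F) r, f z = 0) (v : F) (ht : 0 ≤ t) (htv : t ≤ ‖v‖)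
    (htr : t ≤ r) : ftilde t = 0 := by
  have hnorm : ‖(t / ‖v‖) • v‖ = t := by
    rcases (norm_nonneg v).eq_or_lt with hv | hv
    · rw [← hv, div_zero, zero_smul, norm_zero]
      linarith
    · rw [norm_smul, Real.norm_of_nonneg (div_nonneg ht hv.le), div_mul_cancel₀ _ hv.ne']
  rw [← hnorm, ← hf]
  exact hvanish _ (mem_closedBall_zero_iff.mpr (hnorm.trans_le htr))

theorem integral_translationDist_eq_zero {E : Type*} [NormedAddCommGroup E]
    [InnerProductSpace ℝ E] [MeasurableSpace E] {μ : Measure E} {s : Set E} {x y v : E}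
    {f : E → ℝ} {ftilde : ℝ → ℝ} {r : ℝ} (hf : ∀ z, f z = ftilde ‖z‖)
    (hvanish : ∀ z ∈ closedBall (0 : E) r, f z = 0) (hs : ∀ p ∈ s, ‖p‖ = ‖x‖)
    (hμ : ∀ᵐ η ∂μ, η ∈ convexHull ℝ s) (hv : ∀ p ∈ s, ‖p - y‖ ≤ ‖v‖) (hvr : ‖v‖ ≤ r) :
    ∫ η, ftilde (translationDist x y η) ∂μ = 0 := by
  refine integral_eq_zero_of_ae ?_
  filter_upwards [hμ] with η hη
  have hA := translationDist_le_of_mem_convexHull hs (norm_nonneg v) hv hη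
  exact radial_profile_eq_zero_of_le_norm hf hvanish v (Real.sqrt_nonneg _) hA (hA.trans hvr)

theorem paper_translation_radial_vanishing_general {N : ℕ}
    (G : Subgroup (EuclideanSpace ℝ (Fin N) ≃ₗᵢ[ℝ] EuclideanSpace ℝ (Fin N)))
    [Finite G]
    (x : EuclideanSpace ℝ (Fin N)) (r : ℝ)
    (μ : Measure (EuclideanSpace ℝ (Fin N))) [IsProbabilityMeasure μ]
    (hμ : μ ((convexHull ℝ
      (Set.range fun g : G => (g : EuclideanSpace ℝ (Fin N) ≃ₗᵢ[ℝ] EuclideanSpace ℝ (Fin N)) x))ᶜ) = 0)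
    (ftilde : ℝ → ℝ)
    (f : EuclideanSpace ℝ (Fin N) → ℝ) (hf : ∀ z, f z = ftilde ‖z‖)
    (hvanish : ∀ z ∈ closedBall (0 : EuclideanSpace ℝ (Fin N)) r, f z = 0)
    (u : EuclideanSpace ℝ (Fin N) → ℝ)
    (hu : ∀ y, u y = ∫ η, ftilde (Real.sqrt (‖x‖ ^ 2 + ‖y‖ ^ 2 - 2 * ⟪y, η⟫)) ∂μ) :
    (∀ y, u y ≠ 0 →
      r < ⨆ g : G, ‖(g : EuclideanSpace ℝ (Fin N) ≃ₗᵢ[ℝ] EuclideanSpace ℝ (Fin N)) x - y‖) ∧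
    ∀ y ∈ ⋂ g : G, closedBall ((g : EuclideanSpace ℝ (Fin N) ≃ₗᵢ[ℝ] EuclideanSpace ℝ (Fin N)) x) r,
      u y = 0 := by
  have key : ∀ y, (⨆ g : G,
      ‖(g : EuclideanSpace ℝ (Fin N) ≃ₗᵢ[ℝ] EuclideanSpace ℝ (Fin N)) x - y‖) ≤ r → u y = 0 := by
    intro y hyr
    set d : G → ℝ :=
      fun g => ‖(g : EuclideanSpace ℝ (Fin N) ≃ₗᵢ[ℝ] EuclideanSpace ℝ (Fin N)) x - y‖
    obtain ⟨g₀, hg₀⟩ := exists_eq_ciSup_of_finite (f := d)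
    rw [hu y]
    refine integral_translationDist_eq_zero
      (v := (g₀ : EuclideanSpace ℝ (Fin N) ≃ₗᵢ[ℝ] EuclideanSpace ℝ (Fin N)) x - y) hf hvanish ?_ (mem_ae_iff.mpr hμ) ?_ (hg₀.trans_le hyr)
    · rintro _ ⟨g, rfl⟩
      exact LinearIsometryEquiv.norm_map _ x
    · rintro _ ⟨g, rfl⟩
      exact (le_ciSup (Finite.bddAbove_range d) g).trans_eq hg₀.symm
  refine ⟨fun y hy => lt_of_not_ge fun hyr => hy (key y hyr), fun y hy => key y ?_⟩
  exact ciSup_le fun g => by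
    simpa only [mem_closedBall, dist_eq_norm, norm_sub_rev] using Set.mem_iInter.mp hy g

theorem paper_translation_radial_vanishing {N : ℕ}
    (G : Subgroup (EuclideanSpace ℝ (Fin N) ≃ₗᵢ[ℝ] EuclideanSpace ℝ (Fin N)))
    [Finite G]
    (x : EuclideanSpace ℝ (Fin N)) (r : ℝ) (hr : 0 < r)
    (μ : Measure (EuclideanSpace ℝ (Fin N))) [IsProbabilityMeasure μ]
    (hμ : μ ((convexHull ℝ
      (Set.range fun g : G => (g : EuclideanSpace ℝ (Fin N) ≃ₗᵢ[ℝ] EuclideanSpace ℝ (Fin N)) x))ᶜ) = 0)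
    (ftilde : ℝ → ℝ) (hft : Continuous ftilde)
    (f : EuclideanSpace ℝ (Fin N) → ℝ) (hf : ∀ z, f z = ftilde ‖z‖)
    (hvanish : ∀ z ∈ closedBall (0 : EuclideanSpace ℝ (Fin N)) r, f z = 0)
    (u : EuclideanSpace ℝ (Fin N) → ℝ)
    (hu : ∀ y, u y = ∫ η, ftilde (Real.sqrt (‖x‖ ^ 2 + ‖y‖ ^ 2 - 2 * ⟪y, η⟫)) ∂μ) :
    (∀ y, u y ≠ 0 →
      r < ⨆ g : G, ‖(g : EuclideanSpace ℝ (Fin N) ≃ₗᵢ[ℝ] EuclideanSpace ℝ (Fin N)) x - y‖) ∧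
    ∀ y ∈ ⋂ g : G, closedBall ((g : EuclideanSpace ℝ (Fin N) ≃ₗᵢ[ℝ] EuclideanSpace ℝ (Fin N)) x) r,
      u y = 0 :=
  paper_translation_radial_vanishing_general G x r μ hμ ftilde f hf hvanish u hu
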